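/- Let a, b, c, d > 0, θ := √((a+c+bd)² − 4abd), x₀ := (a+c+bd−θ)/(2b), y₀ := (a+c−bd+θ)/(2d). Let x, y : ℝ → ℝ be differentiable with x(t) ≥ 0 and y(t) ≥ 0 for all t ≥ 0, satisfying x'(t) = a − b·x(t) − x(t)·y(t) and y'(t) = c − d·y(t) + x(t)·y(t) for all t ≥ 0. Then x(t) → x₀ and y(t) → y₀ as t → ∞. -/

import Mathlib

/-!
With `u = x - x₀`, `v = y - y₀` the system reads `u̇ = -(b + y) u - x₀ v`, `v̇ = y u - (d - x₀) v`.
The function `V = u² / 2 + x₀ (y - y₀ - y₀ log (y / y₀))` satisfies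
`V̇ = -(b + y) u² - x₀ (d - x₀) v² / y`, and since `y (y - y₀ - y₀ log (y / y₀)) ≤ v²` and
`x₀ < d`, this gives `V̇ ≤ -k V` with `k = min (2 b) (d - x₀) > 0`. Hence `V` decays exponentially,
and `V` controls both `(x - x₀)²` and `(√y - √y₀)²`. The logarithm makes sense because `y` stays
positive: wherever `y` vanishes, `ẏ = c > 0`.
-/

open Filter Topology

lemma mul_log_sub_log_le {z z₀ : ℝ} (hz : 0 < z) (hz₀ : 0 < z₀) :
    z₀ * (Real.log z - Real.log z₀) ≤ z - z₀ := by
  have h := Real.log_le_sub_one_of_pos (div_pos hz hz₀)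
  rw [Real.log_div hz.ne' hz₀.ne', le_sub_iff_add_le, le_div_iff₀ hz₀] at h
  linarith

noncomputable def volterra (z₀ z : ℝ) : ℝ :=
  z - z₀ - z₀ * (Real.log z - Real.log z₀)

lemma volterra_nonneg {z z₀ : ℝ} (hz : 0 < z) (hz₀ : 0 < z₀) : 0 ≤ volterra z₀ z :=
  sub_nonneg.mpr (mul_log_sub_log_le hz hz₀)

lemma mul_volterra_le_sq {z z₀ : ℝ} (hz : 0 < z) (hz₀ : 0 < z₀) :
    z * volterra z₀ z ≤ (z - z₀) ^ 2 := by
  have h := mul_log_sub_log_le hz₀ hz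
  unfold volterra
  nlinarith

lemma sq_sqrt_sub_sqrt_le_volterra {z z₀ : ℝ} (hz : 0 < z) (hz₀ : 0 < z₀) :
    (√z - √z₀) ^ 2 ≤ volterra z₀ z := by
  have h := mul_log_sub_log_le (Real.sqrt_pos.mpr hz) (Real.sqrt_pos.mpr hz₀)
  rw [Real.log_sqrt hz.le, Real.log_sqrt hz₀.le] at h
  have h' := mul_le_mul_of_nonneg_left h (Real.sqrt_nonneg z₀)
  unfold volterra
  nlinarith [Real.sq_sqrt hz.le, Real.sq_sqrt hz₀.le, Real.mul_self_sqrt hz₀.le]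

lemma hasDerivAt_volterra (z₀ : ℝ) {z : ℝ} (hz : z ≠ 0) :
    HasDerivAt (volterra z₀) (1 - z₀ / z) z := by
  unfold volterra
  exact (((hasDerivAt_id' z).sub_const z₀).sub
    (((Real.hasDerivAt_log hz).sub_const (Real.log z₀)).const_mul z₀)).congr_deriv (by ring)

lemma tendsto_of_sq_sub_le {α : Type*} {l : Filter α} {f g : α → ℝ} {c : ℝ}
    (hf : Tendsto f l (𝓝 0)) (hg : ∀ᶠ t in l, (g t - c) ^ 2 ≤ f t) : Tendsto g l (𝓝 c) := by
  rw [tendsto_iff_norm_sub_tendsto_zero]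
  refine squeeze_zero' (Eventually.of_forall fun _ ↦ norm_nonneg _) ?_
    (by simpa using hf.sqrt)
  filter_upwards [hg] with t ht
  exact Real.abs_le_sqrt ht

lemma tendsto_zero_of_hasDerivAt_le_neg_mul {V V' : ℝ → ℝ} {k t₀ : ℝ} (hk : 0 < k)
    (hV : ∀ t, t₀ < t → HasDerivAt V (V' t) t) (hdecay : ∀ t, t₀ < t → V' t ≤ -(k * V t))
    (hnonneg : ∀ t, t₀ < t → 0 ≤ V t) : Tendsto V atTop (𝓝 0) := by
  set W := fun t ↦ V t * Real.exp (k * t)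
  have hW : ∀ t, t₀ < t → HasDerivAt W ((V' t + k * V t) * Real.exp (k * t)) t := by
    intro t ht
    exact ((hV t ht).mul ((hasDerivAt_id' t).const_mul k).exp).congr_deriv (by ring)
  have hanti : AntitoneOn W (Set.Ioi t₀) := by
    refine antitoneOn_of_hasDerivWithinAt_nonpos (convex_Ioi t₀)
      (f' := fun t ↦ (V' t + k * V t) * Real.exp (k * t))
      (fun t ht ↦ (hW t ht).continuousAt.continuousWithinAt) ?_ ?_ <;>
      rw [interior_Ioi]
    · exact fun t ht ↦ (hW t ht).hasDerivWithinAt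
    · exact fun t ht ↦ mul_nonpos_of_nonpos_of_nonneg (by linarith [hdecay t ht]) (by positivity)
  have hbound : ∀ t, t₀ + 1 ≤ t → V t ≤ W (t₀ + 1) * Real.exp (-(k * t)) := by
    intro t ht
    have hVW : V t = W t * Real.exp (-(k * t)) := by
      simp only [W, mul_assoc, ← Real.exp_add, add_neg_cancel, Real.exp_zero, mul_one]
    rw [hVW]
    gcongr
    exact hanti (by simp) (by simp; linarith) ht
  have hexp : Tendsto (fun t ↦ W (t₀ + 1) * Real.exp (-(k * t))) atTop (𝓝 0) := by
    simpa using ((Real.tendsto_exp_atBot.comp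
      (tendsto_neg_atTop_atBot.comp (tendsto_id.const_mul_atTop hk))).const_mul (W (t₀ + 1)))
  refine tendsto_of_tendsto_of_tendsto_of_le_of_le' tendsto_const_nhds hexp ?_ ?_
  · filter_upwards [eventually_gt_atTop t₀] with t ht using hnonneg t ht
  · filter_upwards [eventually_ge_atTop (t₀ + 1)] with t ht using hbound t ht

lemma pos_of_nonneg_of_deriv_ne_zero {f : ℝ → ℝ} {t₀ t : ℝ} (hf : ∀ s, t₀ ≤ s → 0 ≤ f s)
    (ht : t₀ < t) (hderiv : f t = 0 → deriv f t ≠ 0) : 0 < f t := by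
  refine (hf t ht.le).lt_of_ne fun h ↦ hderiv h.symm ?_
  refine IsLocalMin.deriv_eq_zero ?_
  filter_upwards [eventually_gt_nhds ht] with s hs
  rw [← h]
  exact hf s hs.le

namespace NOPO

lemma equilibrium_spec {a b c d θ x₀ y₀ : ℝ} (ha : 0 < a) (hb : 0 < b) (hc : 0 < c) (hd : 0 < d)
    (hθ : θ = √((a + c + b * d) ^ 2 - 4 * a * b * d))
    (hx₀ : x₀ = (a + c + b * d - θ) / (2 * b)) (hy₀ : y₀ = (a + c - b * d + θ) / (2 * d)) :
    0 < x₀ ∧ 0 < y₀ ∧ x₀ < d ∧ a = b * x₀ + x₀ * y₀ ∧ c = d * y₀ - x₀ * y₀ := by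
  have hbcd : 0 < b * c * d := by positivity
  have hθsq : θ ^ 2 = (a + c - b * d) ^ 2 + 4 * (b * c * d) := by
    rw [hθ, Real.sq_sqrt] <;> nlinarith [sq_nonneg (a + c - b * d)]
  have hθ0 : 0 ≤ θ := hθ ▸ Real.sqrt_nonneg _
  have hθlt : θ < a + c + b * d := by
    rw [hθ, Real.sqrt_lt' (by positivity)]
    nlinarith [mul_pos (mul_pos ha hb) hd]
  have hθgt : |a + c - b * d| < θ := by
    rw [← Real.sqrt_sq hθ0, ← Real.sqrt_sq_eq_abs]
    exact Real.sqrt_lt_sqrt (sq_nonneg _) (by linarith)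
  have hax : a = b * x₀ + x₀ * y₀ := by
    subst hx₀ hy₀
    field_simp
    linear_combination hθsq
  refine ⟨?_, ?_, ?_, hax, ?_⟩
  · rw [hx₀]; exact div_pos (by linarith) (by positivity)
  · rw [hy₀]; exact div_pos (by linarith [neg_abs_le (a + c - b * d)]) (by positivity)
  · rw [hx₀, div_lt_iff₀ (by positivity)]; linarith [le_abs_self (a + c - b * d)]
  · have hsum : b * x₀ + d * y₀ = a + c := by
      subst hx₀ hy₀
      field_simp
      ring
    linarith

noncomputable def lyapunov (x₀ y₀ X Y : ℝ) : ℝ :=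
  (X - x₀) ^ 2 / 2 + x₀ * volterra y₀ Y

section Lyapunov

variable {x₀ y₀ : ℝ}

lemma sq_sub_le_two_mul_lyapunov {X Y : ℝ} (hx₀ : 0 ≤ x₀) (hy₀ : 0 < y₀) (hY : 0 < Y) :
    (X - x₀) ^ 2 ≤ 2 * lyapunov x₀ y₀ X Y := by
  have := mul_nonneg hx₀ (volterra_nonneg hY hy₀)
  unfold lyapunov
  linarith

lemma lyapunov_nonneg {X Y : ℝ} (hx₀ : 0 ≤ x₀) (hy₀ : 0 < y₀) (hY : 0 < Y) :
    0 ≤ lyapunov x₀ y₀ X Y := by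
  nlinarith [sq_sub_le_two_mul_lyapunov (X := X) hx₀ hy₀ hY, sq_nonneg (X - x₀)]

lemma mul_sq_sqrt_sub_le_lyapunov {X Y : ℝ} (hx₀ : 0 ≤ x₀) (hy₀ : 0 < y₀) (hY : 0 < Y) :
    x₀ * (√Y - √y₀) ^ 2 ≤ lyapunov x₀ y₀ X Y := by
  have := mul_le_mul_of_nonneg_left (sq_sqrt_sub_sqrt_le_volterra hY hy₀) hx₀
  unfold lyapunov
  linarith [sq_nonneg (X - x₀)]

lemma hasDerivAt_lyapunov_comp {x y : ℝ → ℝ} {X' Y' t : ℝ} (hx : HasDerivAt x X' t)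
    (hy : HasDerivAt y Y' t) (hyt : y t ≠ 0) :
    HasDerivAt (fun s ↦ lyapunov x₀ y₀ (x s) (y s))
      ((x t - x₀) * X' + x₀ * (1 - y₀ / y t) * Y') t := by
  have hvol := (hasDerivAt_volterra y₀ hyt).comp t hy
  exact ((((hx.sub_const x₀).pow 2).div_const 2).add (hvol.const_mul x₀)).congr_deriv
    (by norm_num; ring)

/-- The left side is the orbital derivative of `lyapunov x₀ y₀` for `a = b x₀ + x₀ y₀`,
`c = d y₀ - x₀ y₀`. -/
lemma deriv_lyapunov_le {b d k X Y : ℝ} (hx₀ : 0 ≤ x₀) (hy₀ : 0 < y₀) (hY : 0 < Y)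
    (hk : 0 ≤ k) (hkb : k ≤ 2 * b) (hkd : k ≤ d - x₀) :
    (X - x₀) * (b * x₀ + x₀ * y₀ - b * X - X * Y)
      + x₀ * (1 - y₀ / Y) * (d * y₀ - x₀ * y₀ - d * Y + X * Y)
      ≤ -(k * lyapunov x₀ y₀ X Y) := by
  have horbital : (X - x₀) * (b * x₀ + x₀ * y₀ - b * X - X * Y)
      + x₀ * (1 - y₀ / Y) * (d * y₀ - x₀ * y₀ - d * Y + X * Y)
      = -((b + Y) * (X - x₀) ^ 2) - x₀ * (d - x₀) * ((Y - y₀) ^ 2 / Y) := by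
    field_simp
    ring
  have hvol : volterra y₀ Y ≤ (Y - y₀) ^ 2 / Y := by
    rw [le_div_iff₀ hY, mul_comm]
    exact mul_volterra_le_sq hY hy₀
  have hvol' : k * volterra y₀ Y ≤ (d - x₀) * ((Y - y₀) ^ 2 / Y) :=
    mul_le_mul hkd hvol (volterra_nonneg hY hy₀) (by linarith)
  rw [horbital, lyapunov]
  nlinarith [mul_le_mul_of_nonneg_left hvol' hx₀, mul_nonneg hY.le (sq_nonneg (X - x₀)),
    mul_nonneg (sub_nonneg.mpr hkb) (sq_nonneg (X - x₀))]

variable {α : Type*} {l : Filter α} {x y : α → ℝ}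

lemma tendsto_fst_of_tendsto_lyapunov (hx₀ : 0 ≤ x₀) (hy₀ : 0 < y₀) (hy : ∀ᶠ t in l, 0 < y t)
    (hV : Tendsto (fun t ↦ lyapunov x₀ y₀ (x t) (y t)) l (𝓝 0)) : Tendsto x l (𝓝 x₀) :=
  tendsto_of_sq_sub_le (by simpa using hV.const_mul 2) <| hy.mono fun _ ht ↦
    sq_sub_le_two_mul_lyapunov hx₀ hy₀ ht

lemma tendsto_snd_of_tendsto_lyapunov (hx₀ : 0 < x₀) (hy₀ : 0 < y₀) (hy : ∀ᶠ t in l, 0 < y t)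
    (hV : Tendsto (fun t ↦ lyapunov x₀ y₀ (x t) (y t)) l (𝓝 0)) : Tendsto y l (𝓝 y₀) := by
  have hsqrt : Tendsto (fun t ↦ √(y t)) l (𝓝 √y₀) := by
    refine tendsto_of_sq_sub_le (by simpa using hV.div_const x₀) (hy.mono fun _ ht ↦ ?_)
    rw [le_div_iff₀ hx₀, mul_comm]
    exact mul_sq_sqrt_sub_le_lyapunov hx₀.le hy₀ ht
  have hsq := hsqrt.pow 2
  rw [Real.sq_sqrt hy₀.le] at hsq
  exact hsq.congr' (hy.mono fun _ ht ↦ Real.sq_sqrt ht.le)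

end Lyapunov

end NOPO

open NOPO

theorem stmt_5 (a b c d : ℝ) (ha : 0 < a) (hb : 0 < b) (hc : 0 < c) (hd : 0 < d)
    (x y : ℝ → ℝ) (hx : Differentiable ℝ x) (hy : Differentiable ℝ y)
    (hynn : ∀ t : ℝ, 0 ≤ t → 0 ≤ y t)
    (hxd : ∀ t : ℝ, 0 ≤ t → deriv x t = a - b * x t - x t * y t)
    (hyd : ∀ t : ℝ, 0 ≤ t → deriv y t = c - d * y t + x t * y t) :
    let θ := Real.sqrt ((a + c + b * d) ^ 2 - 4 * a * b * d)
    let x₀ := (a + c + b * d - θ) / (2 * b)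
    let y₀ := (a + c - b * d + θ) / (2 * d)
    Tendsto x atTop (nhds x₀) ∧ Tendsto y atTop (nhds y₀) := by
  intro θ x₀ y₀
  obtain ⟨hx₀, hy₀, hx₀d, hax, hcy⟩ :=
    equilibrium_spec (θ := θ) (x₀ := x₀) (y₀ := y₀) ha hb hc hd rfl rfl rfl
  clear_value θ x₀ y₀
  have hypos : ∀ t, 0 < t → 0 < y t := fun t ht ↦
    pos_of_nonneg_of_deriv_ne_zero hynn ht fun h ↦ by simp [hyd t ht.le, h, hc.ne']
  have hk : 0 < min (2 * b) (d - x₀) := lt_min (by positivity) (by linarith)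
  have hV : Tendsto (fun t ↦ lyapunov x₀ y₀ (x t) (y t)) atTop (𝓝 0) := by
    refine tendsto_zero_of_hasDerivAt_le_neg_mul hk (t₀ := 0)
      (fun t ht ↦ hasDerivAt_lyapunov_comp (hx t).hasDerivAt (hy t).hasDerivAt (hypos t ht).ne')
      (fun t ht ↦ ?_) (fun t ht ↦ lyapunov_nonneg hx₀.le hy₀ (hypos t ht))
    rw [hxd t ht.le, hyd t ht.le, hax, hcy]
    exact deriv_lyapunov_le hx₀.le hy₀ (hypos t ht) hk.le (min_le_left _ _) (min_le_right _ _)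
  have hy_ev : ∀ᶠ t in atTop, 0 < y t := (eventually_gt_atTop 0).mono hypos
  exact ⟨tendsto_fst_of_tendsto_lyapunov hx₀.le hy₀ hy_ev hV,
    tendsto_snd_of_tendsto_lyapunov hx₀ hy₀ hy_ev hV⟩
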